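/- Cardinality of the discretized fundamental region of B_n and C_n for even M: For every integer n ≥ 1 and every integer k ≥ 0, the number of n-tuples (s₁, s₂, …, s_n) of nonnegative integers satisfying s₁ + 2s₂ + 2s₃ + ⋯ + 2s_n ≤ 2k equals binom(n+k, n) + binom(n+k−1, n). -/
import Mathlib

instance finSumLe (n m : ℕ) : Finite {t : Fin n → ℕ // ∑ i, t i ≤ m} := by
  apply Finite.of_injective (fun t (i : Fin n) => (⟨t.1 i, by
    have := Finset.single_le_sum (f := t.1) (fun i _ => Nat.zero_le _) (Finset.mem_univ i)
    omega⟩ : Fin (m+1)))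
  intro a b hab
  ext i
  exact congrArg Fin.val (congrFun hab i)

/-- sum = m tuples counted by stars and bars -/
lemma cardSumEq (N m : ℕ) :
    Nat.card {u : Fin N → ℕ // ∑ i, u i = m} = (N + m - 1).choose m := by
  have e : {u : Fin N → ℕ // ∑ i, u i = m} ≃ Sym (Fin N) m := by
    refine Equiv.subtypeEquiv
      ⟨fun u => Finsupp.toMultiset (Finsupp.equivFunOnFinite.symm u),
       fun s => Finsupp.equivFunOnFinite (Multiset.toFinsupp s), ?_, ?_⟩ ?_
    · intro u; simp
    · intro s; simp
    · intro u
      show _ ↔ Multiset.card (Finsupp.toMultiset _) = m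
      rw [Finsupp.card_toMultiset, Finsupp.sum_fintype _ _ (fun _ => rfl)]
      rfl
  rw [Nat.card_congr e, Nat.card_eq_fintype_card, Sym.card_sym_eq_choose,
    Fintype.card_fin]

lemma cardSumLe (n m : ℕ) :
    Nat.card {t : Fin n → ℕ // ∑ i, t i ≤ m} = (n + m).choose n := by
  have e : {t : Fin n → ℕ // ∑ i, t i ≤ m} ≃ {u : Fin (n+1) → ℕ // ∑ i, u i = m} := by
    refine ⟨fun t => ⟨Fin.cons (m - ∑ i, t.1 i) t.1, ?_⟩,
      fun u => ⟨Fin.tail u.1, ?_⟩, ?_, ?_⟩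
    · rw [Fin.sum_cons]; omega
    · obtain ⟨u, hu⟩ := u
      have h2 : ∑ i : Fin (n+1), u i = u 0 + ∑ i : Fin n, u i.succ := Fin.sum_univ_succ u
      show ∑ i : Fin n, u i.succ ≤ m
      omega
    · intro t
      ext i
      simp [Fin.tail]
    · intro u
      obtain ⟨u, hu⟩ := u
      have h2 : ∑ i : Fin (n+1), u i = u 0 + ∑ i : Fin n, u i.succ := Fin.sum_univ_succ u
      ext i
      refine Fin.cases ?_ ?_ i
      · simp only [Fin.cons_zero]
        show m - ∑ x : Fin n, u x.succ = u 0
        omega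
      · intro j
        simp [Fin.tail]
  rw [Nat.card_congr e, cardSumEq, show n + 1 + m - 1 = m + n from by omega,
    Nat.choose_symm_add, Nat.add_comm m n]

lemma cardSumLt (n m : ℕ) (hn : 1 ≤ n) :
    Nat.card {t : Fin n → ℕ // ∑ i, t i < m} = (n + m - 1).choose n := by
  cases m with
  | zero =>
    have : IsEmpty {t : Fin n → ℕ // ∑ i, t i < 0} := ⟨fun t => by omega⟩
    rw [Nat.card_of_isEmpty, eq_comm]
    exact Nat.choose_eq_zero_of_lt (by omega)
  | succ m' =>
    have e : {t : Fin n → ℕ // ∑ i, t i < m' + 1} ≃ {t : Fin n → ℕ // ∑ i, t i ≤ m'} :=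
      Equiv.subtypeEquivRight (fun t => Nat.lt_succ_iff)
    rw [Nat.card_congr e, cardSumLe]
    congr 1

instance finSumLt (n k : ℕ) : Finite {t : Fin n → ℕ // ∑ i, t i < k} :=
  Finite.of_injective
    (fun t => (⟨t.1, le_of_lt t.2⟩ : {t : Fin n → ℕ // ∑ i, t i ≤ k}))
    (by intro a b hab
        ext i
        exact congrFun (congrArg Subtype.val hab) i)

theorem card_FM_even (n k : ℕ) (hn : 1 ≤ n) :
    Nat.card {s : Fin n → ℕ //
        ∑ i : Fin n, (if (i : ℕ) = 0 then 1 else 2) * s i ≤ 2 * k} =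
      Nat.choose (n + k) n + Nat.choose (n + k - 1) n := by
  obtain ⟨m, rfl⟩ : ∃ m, n = m + 1 := ⟨n - 1, by omega⟩
  have hsum : ∀ s : Fin (m+1) → ℕ,
      ∑ i : Fin (m+1), (if (i : ℕ) = 0 then 1 else 2) * s i
        = s 0 + 2 * ∑ i : Fin m, s i.succ := by
    intro s
    rw [Fin.sum_univ_succ, Finset.mul_sum]
    simp [Fin.val_succ]
  have e1 : {s : Fin (m+1) → ℕ //
        ∑ i : Fin (m+1), (if (i : ℕ) = 0 then 1 else 2) * s i ≤ 2 * k}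
      ≃ {s : Fin (m+1) → ℕ // s 0 + 2 * ∑ i : Fin m, s i.succ ≤ 2 * k} :=
    Equiv.subtypeEquivRight (fun s => by rw [hsum s])
  have hc : ∀ (a : ℕ) (v : Fin m → ℕ),
      ∑ i : Fin (m+1), Fin.cons a v i = a + ∑ i : Fin m, v i := fun a v => by
    rw [Fin.sum_cons]
  have e2 : {s : Fin (m+1) → ℕ // s 0 + 2 * ∑ i : Fin m, s i.succ ≤ 2 * k}
      ≃ {t : Fin (m+1) → ℕ // ∑ i, t i ≤ k} ⊕ {t : Fin (m+1) → ℕ // ∑ i, t i < k} := by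
    refine ⟨fun s => if h : s.1 0 % 2 = 0
        then Sum.inl ⟨Fin.cons (s.1 0 / 2) (Fin.tail s.1), ?_⟩
        else Sum.inr ⟨Fin.cons (s.1 0 / 2) (Fin.tail s.1), ?_⟩,
      Sum.elim (fun t => ⟨Fin.cons (2 * t.1 0) (Fin.tail t.1), ?_⟩)
        (fun t => ⟨Fin.cons (2 * t.1 0 + 1) (Fin.tail t.1), ?_⟩), ?_, ?_⟩
    · obtain ⟨s, hs⟩ := s
      dsimp only
      rw [hc]
      have h3 : ∑ i : Fin m, Fin.tail s i = ∑ i : Fin m, s i.succ := rfl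
      omega
    · obtain ⟨s, hs⟩ := s
      have h' : ¬ s 0 % 2 = 0 := h
      dsimp only
      rw [hc]
      have h3 : ∑ i : Fin m, Fin.tail s i = ∑ i : Fin m, s i.succ := rfl
      omega
    · obtain ⟨t, ht⟩ := t
      show Fin.cons (2 * t 0) (Fin.tail t) 0
          + 2 * ∑ i : Fin m, Fin.cons (2 * t 0) (Fin.tail t) i.succ ≤ 2 * k
      rw [Fin.cons_zero]
      simp only [Fin.cons_succ]
      have h2 : ∑ i : Fin (m+1), t i = t 0 + ∑ i : Fin m, t i.succ := Fin.sum_univ_succ t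
      have h3 : ∑ i : Fin m, Fin.tail t i = ∑ i : Fin m, t i.succ := rfl
      omega
    · obtain ⟨t, ht⟩ := t
      show Fin.cons (2 * t 0 + 1) (Fin.tail t) 0
          + 2 * ∑ i : Fin m, Fin.cons (2 * t 0 + 1) (Fin.tail t) i.succ ≤ 2 * k
      rw [Fin.cons_zero]
      simp only [Fin.cons_succ]
      have h2 : ∑ i : Fin (m+1), t i = t 0 + ∑ i : Fin m, t i.succ := Fin.sum_univ_succ t
      have h3 : ∑ i : Fin m, Fin.tail t i = ∑ i : Fin m, t i.succ := rfl
      omega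
    · intro s
      obtain ⟨s, hs⟩ := s
      dsimp only
      by_cases h : s 0 % 2 = 0
      · rw [dif_pos h]
        dsimp only [Sum.elim_inl]
        apply Subtype.ext
        dsimp only
        rw [Fin.cons_zero, Fin.tail_cons, show 2 * (s 0 / 2) = s 0 from by omega,
          Fin.cons_self_tail]
      · rw [dif_neg h]
        dsimp only [Sum.elim_inr]
        apply Subtype.ext
        dsimp only
        rw [Fin.cons_zero, Fin.tail_cons, show 2 * (s 0 / 2) + 1 = s 0 from by omega,
          Fin.cons_self_tail]
    · intro t
      rcases t with t | t
      · obtain ⟨t, ht⟩ := t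
        rw [Sum.elim_inl]
        dsimp only
        have hpar : (Fin.cons (α := fun _ => ℕ) (2 * t 0) (Fin.tail t)) 0 % 2 = 0 := by
          rw [Fin.cons_zero]; omega
        rw [dif_pos hpar]
        congr 1
        apply Subtype.ext
        dsimp only
        rw [Fin.tail_cons, Fin.cons_zero, show 2 * t 0 / 2 = t 0 from by omega,
          Fin.cons_self_tail]
      · obtain ⟨t, ht⟩ := t
        rw [Sum.elim_inr]
        dsimp only
        have hpar : ¬ (Fin.cons (α := fun _ => ℕ) (2 * t 0 + 1) (Fin.tail t)) 0 % 2 = 0 := by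
          rw [Fin.cons_zero]; omega
        rw [dif_neg hpar]
        congr 1
        apply Subtype.ext
        dsimp only
        rw [Fin.tail_cons, Fin.cons_zero, show (2 * t 0 + 1) / 2 = t 0 from by omega,
          Fin.cons_self_tail]
  rw [Nat.card_congr (e1.trans e2), Nat.card_sum, cardSumLe, cardSumLt _ _ (by omega)]
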